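/- arXiv:1908.00096 — 2 statements merged into one kernel-verified Lean document; each statement's English description precedes it below -/
import Mathlib

section
/- Theorem (norm-equivalence of robustness curves for linear classifiers): For any linear classifier f(x) = sgn(⟨w, x⟩ + b) with w ≠ 0, there exist constants c, c' > 0 such that for all ε ≥ 0, L_{ℓ¹,ε}(f) = L_{ℓ²,ε/c}(f) = L_{ℓ∞,ε/c'}(f). -/
/-!
Over the `n`-ball of radius `ε` the functional `u ↦ ⟨w, u⟩` has maximum `ε‖w‖_*`, where `‖·‖_*`
is the dual norm, and (by symmetry of the ball) minimum `-ε‖w‖_*`. So a point can be moved to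
the other side of the hyperplane within `n`-distance `ε` iff its margin `⟨w, x⟩ + b` lies within
`ε‖w‖_*` of the wrong side, and `L_{n,ε}` depends on `(n, ε)` only through `ε‖w‖_*`. The duals of
`ℓ¹, ℓ², ℓ∞` are `ℓ∞, ℓ², ℓ¹`, which gives `c = ‖w‖₂/‖w‖∞` and `c' = ‖w‖₁/‖w‖∞`.
-/

open Finset MeasureTheory

noncomputable def l1 {d : ℕ} (x : Fin d → ℝ) : ℝ := ∑ i, |x i|
noncomputable def l2 {d : ℕ} (x : Fin d → ℝ) : ℝ := Real.sqrt (∑ i, (x i) ^ 2)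
noncomputable def linf {d : ℕ} (x : Fin d → ℝ) : ℝ := ⨆ i, |x i|

/-- The linear classifier `x ↦ sgn(⟨w, x⟩ + b)` with values in `{-1, 1} ⊆ ℝ`. -/
noncomputable def linClass {d : ℕ} (w : Fin d → ℝ) (b : ℝ) (x : Fin d → ℝ) : ℝ :=
  if 0 ≤ (∑ i, w i * x i) + b then 1 else -1

/-- The `ε`-adversarial loss of a classifier `f`. -/
noncomputable def advLoss {d : ℕ}
    (P : Measure ((Fin d → ℝ) × ℝ)) (n : (Fin d → ℝ) → ℝ) (f : (Fin d → ℝ) → ℝ)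
    (ε : ℝ) : ENNReal :=
  P {p | ∃ x' : Fin d → ℝ, n (p.1 - x') ≤ ε ∧ f x' ≠ p.2}

open Matrix

section LinearClassifier

variable {d : ℕ}

lemma linClass_ne_iff (w : Fin d → ℝ) (b : ℝ) (x : Fin d → ℝ) (y : ℝ) :
    linClass w b x ≠ y ↔ (y = 1 → w ⬝ᵥ x + b < 0) ∧ (y = -1 → 0 ≤ w ⬝ᵥ x + b) := by
  change (if 0 ≤ w ⬝ᵥ x + b then (1 : ℝ) else -1) ≠ y ↔ _
  split_ifs <;> grind

/-- For a norm `n`, this says that `N` is the dual norm of `w` and that it is attained. -/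
def IsDualNorm (n : (Fin d → ℝ) → ℝ) (w : Fin d → ℝ) (N : ℝ) : Prop :=
  ∀ ε, 0 ≤ ε → IsGreatest ((w ⬝ᵥ ·) '' {u | n u ≤ ε}) (ε * N)

lemma IsDualNorm.of_le {n : (Fin d → ℝ) → ℝ} {w : Fin d → ℝ} {N : ℝ} (hN : 0 ≤ N)
    (hle : ∀ u, w ⬝ᵥ u ≤ N * n u) (hex : ∀ ε, 0 ≤ ε → ∃ u, n u ≤ ε ∧ w ⬝ᵥ u = ε * N) :
    IsDualNorm n w N := fun ε hε =>
  ⟨hex ε hε, by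
    rintro _ ⟨u, hu : n u ≤ ε, rfl⟩
    calc w ⬝ᵥ u ≤ N * n u := hle u
      _ ≤ ε * N := by rw [mul_comm ε]; gcongr⟩

/-- `linClass` sends the hyperplane itself to `1`, hence one strict and one non-strict
inequality. -/
lemma exists_linClass_ne_iff {n : (Fin d → ℝ) → ℝ} (hn : ∀ v, n (-v) = n v)
    {w : Fin d → ℝ} {N ε : ℝ} (hN : IsDualNorm n w N) (hε : 0 ≤ ε) (b : ℝ)
    (x : Fin d → ℝ) (y : ℝ) :
    (∃ x', n (x - x') ≤ ε ∧ linClass w b x' ≠ y) ↔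
      (y = 1 → w ⬝ᵥ x + b < ε * N) ∧ (y = -1 → -(ε * N) ≤ w ⬝ᵥ x + b) := by
  have hmax := hN ε hε
  simp only [linClass_ne_iff]
  constructor
  · rintro ⟨x', hx', hy1, hy2⟩
    have hfwd : w ⬝ᵥ (x - x') ≤ ε * N := hmax.2 ⟨_, hx', rfl⟩
    have hbwd : w ⬝ᵥ (x' - x) ≤ ε * N :=
      hmax.2 ⟨_, show n (x' - x) ≤ ε by rwa [← neg_sub, hn], rfl⟩
    rw [dotProduct_sub] at hfwd hbwd
    refine ⟨fun h => ?_, fun h => ?_⟩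
    · linarith [hy1 h]
    · linarith [hy2 h]
  · rintro ⟨hy1, hy2⟩
    obtain ⟨u, hu : n u ≤ ε, hwu : w ⬝ᵥ u = ε * N⟩ := hmax.1
    by_cases hy : y = 1
    · refine ⟨x - u, by rwa [sub_sub_cancel], fun _ => ?_, fun h => by norm_num [h] at hy⟩
      rw [dotProduct_sub, hwu]
      linarith [hy1 hy]
    · refine ⟨x + u, by rwa [sub_add_cancel_left, hn], fun h => absurd h hy, fun h => ?_⟩
      rw [dotProduct_add, hwu]
      linarith [hy2 h]

lemma advLoss_linClass_eq_of_mul_eq {n n' : (Fin d → ℝ) → ℝ} (hn : ∀ v, n (-v) = n v)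
    (hn' : ∀ v, n' (-v) = n' v) {w : Fin d → ℝ} {N N' ε ε' : ℝ} (hN : IsDualNorm n w N)
    (hN' : IsDualNorm n' w N') (hε : 0 ≤ ε) (hε' : 0 ≤ ε') (h : ε * N = ε' * N')
    (P : Measure ((Fin d → ℝ) × ℝ)) (b : ℝ) :
    advLoss P n (linClass w b) ε = advLoss P n' (linClass w b) ε' := by
  unfold advLoss
  congr 1
  ext p
  simp only [Set.mem_ofPred_eq, exists_linClass_ne_iff hn hN hε,
    exists_linClass_ne_iff hn' hN' hε', h]

end LinearClassifier

section Norms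

variable {d : ℕ}

lemma l1_neg (v : Fin d → ℝ) : l1 (-v) = l1 v := by simp [l1]

lemma l2_neg (v : Fin d → ℝ) : l2 (-v) = l2 v := by simp [l2]

lemma linf_neg (v : Fin d → ℝ) : linf (-v) = linf v := by simp [linf]

lemma abs_le_l1 (v : Fin d → ℝ) (i : Fin d) : |v i| ≤ l1 v :=
  Finset.single_le_sum (f := fun i => |v i|) (fun _ _ => abs_nonneg _) (Finset.mem_univ i)

lemma abs_le_l2 (v : Fin d → ℝ) (i : Fin d) : |v i| ≤ l2 v :=
  Real.abs_le_sqrt <| Finset.single_le_sum (f := fun i => v i ^ 2) (fun _ _ => sq_nonneg _)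
    (Finset.mem_univ i)

lemma abs_le_linf (v : Fin d → ℝ) (i : Fin d) : |v i| ≤ linf v :=
  le_ciSup (f := fun i => |v i|) (Set.finite_range _).bddAbove i

lemma linf_nonneg (v : Fin d → ℝ) : 0 ≤ linf v :=
  Real.iSup_nonneg fun _ => abs_nonneg _

lemma linf_le_iff {v : Fin d → ℝ} {ε : ℝ} (hε : 0 ≤ ε) : linf v ≤ ε ↔ ∀ i, |v i| ≤ ε :=
  ⟨fun h i => (abs_le_linf v i).trans h, fun h => Real.iSup_le h hε⟩

lemma dotProduct_le_linf_mul_l1 (v u : Fin d → ℝ) : v ⬝ᵥ u ≤ linf v * l1 u :=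
  calc v ⬝ᵥ u ≤ ∑ i, |v i| * |u i| :=
        Finset.sum_le_sum fun i _ => (le_abs_self _).trans (abs_mul _ _).le
    _ ≤ ∑ i, linf v * |u i| := by gcongr with i; exact abs_le_linf v i
    _ = linf v * l1 u := (Finset.mul_sum _ _ _).symm

lemma dotProduct_le_l2_mul_l2 (v u : Fin d → ℝ) : v ⬝ᵥ u ≤ l2 v * l2 u :=
  Real.sum_mul_le_sqrt_mul_sqrt _ v u

lemma l2_smul (c : ℝ) (v : Fin d → ℝ) : l2 (c • v) = |c| * l2 v := by
  simp only [l2, Pi.smul_apply, smul_eq_mul, mul_pow, ← Finset.mul_sum]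
  rw [Real.sqrt_mul (sq_nonneg c), Real.sqrt_sq_eq_abs]

lemma dotProduct_self_eq_l2_sq (v : Fin d → ℝ) : v ⬝ᵥ v = l2 v ^ 2 := by
  rw [l2, Real.sq_sqrt (Finset.sum_nonneg fun i _ => sq_nonneg _)]
  simp only [dotProduct, sq]

lemma abs_mul_sign_le {ε : ℝ} (hε : 0 ≤ ε) (x : ℝ) : |ε * SignType.sign x| ≤ ε := by
  rcases lt_trichotomy x 0 with hx | rfl | hx <;> simp [*, abs_of_nonneg hε]

lemma mul_mul_sign_self (ε x : ℝ) : x * (ε * SignType.sign x) = ε * |x| := by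
  rw [mul_left_comm, self_mul_sign]

lemma l1_single (i : Fin d) (a : ℝ) : l1 (Pi.single i a) = |a| := by
  rw [l1, Finset.sum_eq_single i (fun j _ hj => by simp [hj]) (by simp)]
  simp

lemma l2_nonneg (v : Fin d → ℝ) : 0 ≤ l2 v := Real.sqrt_nonneg _

lemma isDualNorm_l1 (w : Fin d → ℝ) : IsDualNorm l1 w (linf w) := by
  refine .of_le (linf_nonneg w) (dotProduct_le_linf_mul_l1 w) fun ε hε => ?_
  rcases isEmpty_or_nonempty (Fin d) with hd | hd
  · exact ⟨0, by simp [l1, hε], by simp [linf]⟩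
  obtain ⟨i, hi⟩ := exists_eq_ciSup_of_finite (f := fun i => |w i|)
  refine ⟨Pi.single i (ε * SignType.sign (w i)), ?_, ?_⟩
  · rw [l1_single]
    exact abs_mul_sign_le hε _
  · rw [dotProduct_single, mul_mul_sign_self, linf, ← hi]

lemma isDualNorm_l2 (w : Fin d → ℝ) : IsDualNorm l2 w (l2 w) := by
  refine .of_le (l2_nonneg w) (dotProduct_le_l2_mul_l2 w) fun ε hε => ?_
  rcases (l2_nonneg w).eq_or_lt with hw | hw
  · exact ⟨0, by simp [l2, hε], by simp [← hw]⟩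
  refine ⟨(ε / l2 w) • w, ?_, ?_⟩
  · rw [l2_smul, abs_of_nonneg (by positivity), div_mul_cancel₀ _ hw.ne']
  · rw [dotProduct_smul, dotProduct_self_eq_l2_sq, smul_eq_mul]
    field_simp

lemma isDualNorm_linf (w : Fin d → ℝ) : IsDualNorm linf w (l1 w) := by
  refine .of_le (Finset.sum_nonneg fun i _ => abs_nonneg (w i))
    (fun u => by rw [dotProduct_comm, mul_comm]; exact dotProduct_le_linf_mul_l1 u w)
    fun ε hε => ⟨fun i => ε * SignType.sign (w i), ?_, ?_⟩
  · exact (linf_le_iff hε).2 fun i => abs_mul_sign_le hε _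
  · simp only [dotProduct, mul_mul_sign_self, l1, Finset.mul_sum]

end Norms

theorem linear_robustness_curves_norm_equivalent_general {d : ℕ}
    (P : Measure ((Fin d → ℝ) × ℝ))
    (w : Fin d → ℝ) (hw : w ≠ 0) (b : ℝ) :
    ∃ c c' : ℝ, 0 < c ∧ 0 < c' ∧
      ∀ ε : ℝ, 0 ≤ ε →
        advLoss P l1 (linClass w b) ε = advLoss P l2 (linClass w b) (ε / c) ∧
        advLoss P l1 (linClass w b) ε = advLoss P linf (linClass w b) (ε / c') := by
  obtain ⟨i, hi⟩ := Function.ne_iff.mp hw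
  have hpos : 0 < |w i| := abs_pos.mpr hi
  have hlinf : 0 < linf w := hpos.trans_le (abs_le_linf w i)
  have hl2 : 0 < l2 w := hpos.trans_le (abs_le_l2 w i)
  have hl1 : 0 < l1 w := hpos.trans_le (abs_le_l1 w i)
  refine ⟨l2 w / linf w, l1 w / linf w, by positivity, by positivity, fun ε hε => ⟨?_, ?_⟩⟩
  · exact advLoss_linClass_eq_of_mul_eq l1_neg l2_neg (isDualNorm_l1 w) (isDualNorm_l2 w) hε
      (by positivity) (by field_simp) P b
  · exact advLoss_linClass_eq_of_mul_eq l1_neg linf_neg (isDualNorm_l1 w) (isDualNorm_linf w) hε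
      (by positivity) (by field_simp) P b

theorem linear_robustness_curves_norm_equivalent {d : ℕ}
    (P : Measure ((Fin d → ℝ) × ℝ)) [IsProbabilityMeasure P]
    (hlabels : P {p | p.2 = 1 ∨ p.2 = -1} = 1)
    (w : Fin d → ℝ) (hw : w ≠ 0) (b : ℝ) :
    ∃ c c' : ℝ, 0 < c ∧ 0 < c' ∧
      ∀ ε : ℝ, 0 ≤ ε →
        advLoss P l1 (linClass w b) ε = advLoss P l2 (linClass w b) (ε / c) ∧
        advLoss P l1 (linClass w b) ε = advLoss P linf (linClass w b) (ε / c') :=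
  linear_robustness_curves_norm_equivalent_general P w hw b
end

section
/- For a linear classifier f(x) = sgn(⟨w,x⟩ + b) with w ≠ 0, a point x with f(x) = y admits an ε-adversarial example in norm n (i.e., ∃ x' with n(x−x') ≤ ε and f(x') ≠ y) if and only if the n-distance from x to the hyperplane {p : ⟨w,p⟩ + b = 0} is at most ε (with sgn taken so that sign flips occur at the boundary). -/
open Finset

section aux

variable {d : ℕ} (n : (Fin d → ℝ) → ℝ)

lemma n_sum_le (hn_add : ∀ x y, n (x + y) ≤ n x + n y) (hn0 : n 0 = 0)
    {ι : Type*} (s : Finset ι) (f : ι → (Fin d → ℝ)) :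
    n (∑ i ∈ s, f i) ≤ ∑ i ∈ s, n (f i) := by
  classical
  induction s using Finset.induction with
  | empty => simp [hn0]
  | insert a s hx ih =>
      rw [Finset.sum_insert hx, Finset.sum_insert hx]
      exact (hn_add _ _).trans (by linarith)

lemma n_continuous
    (hn_nonneg : ∀ x, 0 ≤ n x)
    (hn_add : ∀ x y, n (x + y) ≤ n x + n y)
    (hn_smul : ∀ (a : ℝ) x, n (a • x) = |a| * n x)
    (hn_def : ∀ x, n x = 0 ↔ x = 0) :
    Continuous n := by
  have hn0 : n 0 = 0 := (hn_def 0).2 rfl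
  set C : ℝ := ∑ i : Fin d, n (Pi.single i 1) with hC
  have hCnn : 0 ≤ C := Finset.sum_nonneg fun i _ => hn_nonneg _
  have hle : ∀ v : Fin d → ℝ, n v ≤ C * ‖v‖ := by
    intro v
    have hv : v = ∑ i : Fin d, v i • (Pi.single i 1 : Fin d → ℝ) := by
      ext j; simp [Pi.single_apply, Finset.sum_ite_eq', eq_comm]
    calc n v ≤ ∑ i : Fin d, n (v i • (Pi.single i 1 : Fin d → ℝ)) := by
              conv_lhs => rw [hv]
              exact n_sum_le n hn_add hn0 _ _
      _ = ∑ i : Fin d, |v i| * n (Pi.single i (1:ℝ)) := by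
              simp [hn_smul]
      _ ≤ ∑ i : Fin d, ‖v‖ * n (Pi.single i (1:ℝ)) := by
              refine Finset.sum_le_sum fun i _ => ?_
              exact mul_le_mul_of_nonneg_right (by simpa using norm_le_pi_norm v i)
                (hn_nonneg _)
      _ = C * ‖v‖ := by rw [← Finset.mul_sum]; ring
  have hlip : LipschitzWith (Real.toNNReal C) n := by
    refine LipschitzWith.of_dist_le_mul fun a b => ?_
    have h1 : n a - n b ≤ n (a - b) := by
      have := hn_add (a - b) b; simp at this; linarith
    have h2 : n b - n a ≤ n (a - b) := by
      have := hn_add (b - a) a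
      have hs : n (b - a) = n (a - b) := by
        have := hn_smul (-1) (a - b); simp at this; simpa [neg_sub] using this
      simp at this; linarith [hs ▸ this]
    have habs : dist (n a) (n b) ≤ n (a - b) := by
      rw [Real.dist_eq, abs_sub_le_iff]; exact ⟨h1, h2⟩
    calc dist (n a) (n b) ≤ n (a - b) := habs
      _ ≤ C * ‖a - b‖ := hle _
      _ = (Real.toNNReal C) * dist a b := by
          rw [Real.coe_toNNReal C hCnn, dist_eq_norm]
  exact hlip.continuous

lemma n_lower_bound
    (hn_nonneg : ∀ x, 0 ≤ n x)
    (hn_add : ∀ x y, n (x + y) ≤ n x + n y)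
    (hn_smul : ∀ (a : ℝ) x, n (a • x) = |a| * n x)
    (hn_def : ∀ x, n x = 0 ↔ x = 0) (hd : 0 < d) :
    ∃ c : ℝ, 0 < c ∧ ∀ v, c * ‖v‖ ≤ n v := by
  have hcont := n_continuous n hn_nonneg hn_add hn_smul hn_def
  have hsne : (Metric.sphere (0 : Fin d → ℝ) 1).Nonempty := by
    refine ⟨(Pi.single ⟨0, hd⟩ 1 : Fin d → ℝ), ?_⟩
    simp [Pi.norm_single]
  obtain ⟨x₀, hx₀s, hx₀min⟩ :=
    (isCompact_sphere (0 : Fin d → ℝ) 1).exists_isMinOn hsne hcont.continuousOn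
  have hx₀norm : ‖x₀‖ = 1 := by simpa using hx₀s
  have hx₀ne : x₀ ≠ 0 := by intro h; rw [h] at hx₀norm; simp at hx₀norm
  refine ⟨n x₀, lt_of_le_of_ne (hn_nonneg _) fun h => hx₀ne ((hn_def _).1 h.symm), ?_⟩
  intro v
  rcases eq_or_ne v 0 with rfl | hv
  · simp [(hn_def 0).2 rfl]
  · have hvn : ‖v‖ ≠ 0 := norm_ne_zero_iff.2 hv
    have hz : (‖v‖⁻¹ • v) ∈ Metric.sphere (0 : Fin d → ℝ) 1 := by
      simp [norm_smul, abs_inv, abs_of_nonneg (norm_nonneg v), inv_mul_cancel₀ hvn]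
    have := hx₀min hz
    simp only [Set.mem_setOf_eq] at this
    have hnv : n (‖v‖⁻¹ • v) = ‖v‖⁻¹ * n v := by
      rw [hn_smul]; congr 1
      rw [abs_inv, abs_of_nonneg (norm_nonneg v)]
    rw [hnv] at this
    have hvpos : 0 < ‖v‖ := (norm_nonneg v).lt_of_ne (Ne.symm hvn)
    calc n x₀ * ‖v‖ ≤ (‖v‖⁻¹ * n v) * ‖v‖ := by nlinarith
      _ = n v := by field_simp
  
lemma dist_attained
    (hn_nonneg : ∀ x, 0 ≤ n x)
    (hn_add : ∀ x y, n (x + y) ≤ n x + n y)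
    (hn_smul : ∀ (a : ℝ) x, n (a • x) = |a| * n x)
    (hn_def : ∀ x, n x = 0 ↔ x = 0)
    (w : Fin d → ℝ) (hw : w ≠ 0) (b : ℝ) (x : Fin d → ℝ) :
    ∃ p : Fin d → ℝ, (∑ i, w i * p i) + b = 0 ∧
      ∀ q : Fin d → ℝ, (∑ i, w i * q i) + b = 0 → n (x - p) ≤ n (x - q) := by
  have hcont := n_continuous n hn_nonneg hn_add hn_smul hn_def
  obtain ⟨i₀, hi₀⟩ := Function.ne_iff.1 hw
  simp only [Pi.zero_apply] at hi₀
  have hd : 0 < d := i₀.pos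
  obtain ⟨c, hc, hlb⟩ := n_lower_bound n hn_nonneg hn_add hn_smul hn_def hd
  set Q : ℝ := ∑ i, w i * w i with hQ
  have hQpos : 0 < Q := by
    refine Finset.sum_pos' (fun i _ => mul_self_nonneg _) ⟨i₀, Finset.mem_univ _, ?_⟩
    exact mul_self_pos.2 hi₀
  set p₀ : Fin d → ℝ := (-b / Q) • w with hp₀
  have hp₀mem : (∑ i, w i * p₀ i) + b = 0 := by
    have : (∑ i, w i * p₀ i) = (-b / Q) * Q := by
      rw [hQ, Finset.mul_sum]
      refine Finset.sum_congr rfl fun i _ => ?_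
      simp [hp₀, Pi.smul_apply, smul_eq_mul]; ring
    rw [this]; field_simp; ring
  set R : ℝ := n (x - p₀) with hR
  set g : (Fin d → ℝ) → ℝ := fun p => (∑ i, w i * p i) + b with hg
  have hgcont : Continuous g :=
    (continuous_finset_sum _ fun i _ => (continuous_const.mul (continuous_apply i))).add
      continuous_const
  have hfcont : Continuous fun p : Fin d → ℝ => n (x - p) :=
    hcont.comp (continuous_const.sub continuous_id)
  set K : Set (Fin d → ℝ) := {p | g p = 0 ∧ n (x - p) ≤ R} with hK
  have hKclosed : IsClosed K :=
    (isClosed_eq hgcont continuous_const).inter (isClosed_le hfcont continuous_const)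
  have hKbdd : Bornology.IsBounded K := by
    refine (Metric.isBounded_closedBall (x := (0 : Fin d → ℝ)) (r := ‖x‖ + R / c)).subset ?_
    intro p hp
    rw [Metric.mem_closedBall, dist_zero_right]
    have h1 : c * ‖x - p‖ ≤ R := (hlb (x - p)).trans hp.2
    have h2 : ‖x - p‖ ≤ R / c := by rw [le_div_iff₀ hc]; linarith
    calc ‖p‖ = ‖x - (x - p)‖ := by ring_nf
      _ ≤ ‖x‖ + ‖x - p‖ := norm_sub_le _ _
      _ ≤ ‖x‖ + R / c := by linarith
  have hKcomp : IsCompact K := Metric.isCompact_of_isClosed_isBounded hKclosed hKbdd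
  have hKne : K.Nonempty := ⟨p₀, hp₀mem, le_refl _⟩
  obtain ⟨p, hpK, hpmin⟩ := hKcomp.exists_isMinOn hKne hfcont.continuousOn
  refine ⟨p, hpK.1, fun q hq => ?_⟩
  by_cases hqR : n (x - q) ≤ R
  · exact hpmin (⟨hq, hqR⟩ : q ∈ K)
  · have := hpmin (⟨hp₀mem, le_refl _⟩ : p₀ ∈ K)
    simp only [Set.mem_setOf_eq] at this
    push_neg at hqR
    exact this.trans hqR.le

end aux

/-- Distance from `x` to the hyperplane `{p | ⟨w, p⟩ + b = 0}` in the norm `n`. -/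
noncomputable def hyperplaneDist {d : ℕ} (n : (Fin d → ℝ) → ℝ) (w : Fin d → ℝ) (b : ℝ)
    (x : Fin d → ℝ) : ℝ :=
  sInf {r : ℝ | ∃ p : Fin d → ℝ, (∑ i, w i * p i) + b = 0 ∧ r = n (x - p)}

/-- For a linear classifier `sgn(⟨w,x⟩ + b)` (with the sign convention that a sign flip
occurs at the decision boundary), a correctly classified point `x` with label
`y ∈ {-1,1}` admits an `ε`-adversarial example in the norm `n` iff its `n`-distance to
the decision hyperplane is at most `ε`.  Being correctly classified is expressed as
`0 ≤ y * (⟨w,x⟩ + b)`, and `x'` being an adversarial example (the sign flipping, with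
flips occurring at the boundary) as `y * (⟨w,x'⟩ + b) ≤ 0`. -/
theorem linear_adv_example_iff_dist_le {d : ℕ}
    (n : (Fin d → ℝ) → ℝ)
    (hn_nonneg : ∀ x, 0 ≤ n x)
    (hn_add : ∀ x y, n (x + y) ≤ n x + n y)
    (hn_smul : ∀ (a : ℝ) x, n (a • x) = |a| * n x)
    (hn_def : ∀ x, n x = 0 ↔ x = 0)
    (w : Fin d → ℝ) (hw : w ≠ 0) (b : ℝ) (ε : ℝ) (hε : 0 ≤ ε)
    (x : Fin d → ℝ) (y : ℝ) (hy : y = 1 ∨ y = -1)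
    (hcorrect : 0 ≤ y * ((∑ i, w i * x i) + b)) :
    (∃ x' : Fin d → ℝ, n (x - x') ≤ ε ∧ y * ((∑ i, w i * x' i) + b) ≤ 0) ↔
      hyperplaneDist n w b x ≤ ε := by
  set S : Set ℝ := {r : ℝ | ∃ p : Fin d → ℝ, (∑ i, w i * p i) + b = 0 ∧ r = n (x - p)}
    with hS
  have hSbdd : BddBelow S := ⟨0, fun r ⟨p, _, hr⟩ => hr ▸ hn_nonneg _⟩
  have hy2 : y * y = 1 := by rcases hy with rfl | rfl <;> norm_num
  constructor
  · rintro ⟨x', hle, hflip⟩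
    set A : ℝ := y * ((∑ i, w i * x i) + b) with hA
    set B : ℝ := y * ((∑ i, w i * x' i) + b) with hB
    rcases eq_or_lt_of_le hcorrect with hA0 | hApos
    · -- x itself is on the hyperplane
      have hx0 : (∑ i, w i * x i) + b = 0 := by
        have := congrArg (fun t => y * t) hA0
        simp only [mul_zero] at this
        calc (∑ i, w i * x i) + b = (y * y) * ((∑ i, w i * x i) + b) := by rw [hy2]; ring
          _ = 0 := by rw [mul_assoc, ← hA, ← hA0]; ring
      have h0S : (0 : ℝ) ∈ S := ⟨x, hx0, by simp [(hn_def 0).2 rfl]⟩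
      exact (csInf_le hSbdd h0S).trans hε
    · have hAB : 0 < A - B := by linarith
      set t : ℝ := A / (A - B) with ht
      have htpos : 0 < t := div_pos hApos hAB
      have htle : t ≤ 1 := by
        rw [div_le_one hAB]; linarith
      set p : Fin d → ℝ := x + t • (x' - x) with hp
      have hsum : (∑ i, w i * p i) = (∑ i, w i * x i)
          + t * ((∑ i, w i * x' i) - (∑ i, w i * x i)) := by
        rw [mul_sub, Finset.mul_sum, Finset.mul_sum, ← Finset.sum_sub_distrib,
          ← Finset.sum_add_distrib]
        refine Finset.sum_congr rfl fun i _ => ?_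
        simp [hp, Pi.smul_apply, smul_eq_mul]; ring
      have hyp : y * ((∑ i, w i * p i) + b) = 0 := by
        rw [hsum]
        have : y * ((∑ i, w i * x i) + t * ((∑ i, w i * x' i) - (∑ i, w i * x i)) + b)
            = A + t * (B - A) := by rw [hA, hB]; ring
        rw [this, ht]; field_simp; ring
      have hp0 : (∑ i, w i * p i) + b = 0 := by
        calc (∑ i, w i * p i) + b = (y * y) * ((∑ i, w i * p i) + b) := by rw [hy2]; ring
          _ = 0 := by rw [mul_assoc, hyp, mul_zero]
      have hxp : n (x - p) ≤ ε := by
        have h1 : x - p = t • (x - x') := by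
          rw [hp]; ext i; simp [Pi.smul_apply, smul_eq_mul]; ring
        rw [h1, hn_smul, abs_of_pos htpos]
        calc t * n (x - x') ≤ 1 * n (x - x') :=
              mul_le_mul_of_nonneg_right htle (hn_nonneg _)
          _ = n (x - x') := one_mul _
          _ ≤ ε := hle
      exact (csInf_le hSbdd ⟨p, hp0, rfl⟩).trans hxp
  · intro hdist
    obtain ⟨p, hpmem, hpmin⟩ := dist_attained n hn_nonneg hn_add hn_smul hn_def w hw b x
    have hSlb : ∀ r ∈ S, n (x - p) ≤ r := by
      rintro r ⟨q, hq, rfl⟩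
      exact hpmin q hq
    have hSne : S.Nonempty := ⟨n (x - p), p, hpmem, rfl⟩
    have : n (x - p) ≤ sInf S := le_csInf hSne hSlb
    refine ⟨p, this.trans hdist, ?_⟩
    rw [hpmem, mul_zero]
end
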